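/- arXiv:2410.16604 — 2 statements merged into one kernel-verified Lean document; each statement's English description precedes it below -/
import Mathlib

section
/- Let G be a connected simple graph on n ≥ 2 vertices and let 0 < p < 2 be a real number. Then the p-energy of G satisfies E_p(G) ≥ 2(n−1)^{p/2}, i.e. E_p(G) ≥ E_p(S_n) where S_n is the star graph on n vertices. -/
/-!
Write `λᵢ` for the adjacency eigenvalues, `m` for the number of edges, `t = n - 1`, and put
`xᵢ = λᵢ²`. Then `∑ xᵢ = tr A² = 2m ≥ 2t`, since a connected graph has at least `n - 1` edges,
and every `xᵢ ≤ 2m - t` by Hong's bound `λ² ≤ 2m - n + 1`. For `0 ≤ q ≤ 1` these two constraints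
alone force `∑ xᵢ ^ q ≥ 2 t ^ q`; take `q = p / 2`.
-/

open Finset MeasureTheory

/-- The eigenvalues of the (real) adjacency matrix of a simple graph on `Fin n`. -/
noncomputable def adjEigenvalues {n : ℕ} (G : SimpleGraph (Fin n)) [DecidableRel G.Adj] :
    Fin n → ℝ :=
  Matrix.IsHermitian.eigenvalues
    ((Matrix.conjTranspose_eq_transpose_of_trivial (G.adjMatrix ℝ)).trans G.isSymm_adjMatrix)

/-- The `p`-energy of a graph: the sum of the `p`-th powers of the absolute values of the
adjacency eigenvalues. -/
noncomputable def pEnergy {n : ℕ} (G : SimpleGraph (Fin n)) [DecidableRel G.Adj] (p : ℝ) : ℝ :=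
  ∑ i, |adjEigenvalues G i| ^ p

/-- The star graph on `Fin n`: vertex `0` is adjacent to all other vertices. -/
def starGraph (n : ℕ) : SimpleGraph (Fin n) where
  Adj u v := ((u : ℕ) = 0 ∨ (v : ℕ) = 0) ∧ u ≠ v
  symm := ⟨fun _ _ h => ⟨h.1.symm, h.2.symm⟩⟩
  loopless := ⟨fun _ h => h.2 rfl⟩

instance (n : ℕ) : DecidableRel (starGraph n).Adj :=
  fun u v => inferInstanceAs (Decidable (((u : ℕ) = 0 ∨ (v : ℕ) = 0) ∧ u ≠ v))

namespace Real

lemma mul_rpow_sub_one_le_rpow {x b q : ℝ} (hx : 0 ≤ x) (hxb : x ≤ b) (hq : q ≤ 1) :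
    x * b ^ (q - 1) ≤ x ^ q := by
  rcases hx.eq_or_lt with rfl | hx
  · simpa using rpow_nonneg le_rfl q
  calc x * b ^ (q - 1) ≤ x * x ^ (q - 1) :=
        mul_le_mul_of_nonneg_left (rpow_le_rpow_of_nonpos hx hxb (by linarith)) hx.le
    _ = x ^ q := by rw [rpow_sub_one hx.ne', mul_div_cancel₀ _ hx.ne']

lemma sum_mul_rpow_sub_one_le_sum_rpow {ι : Type*} (s : Finset ι) {f : ι → ℝ} {b q : ℝ}
    (hf : ∀ i ∈ s, 0 ≤ f i) (hfb : ∀ i ∈ s, f i ≤ b) (hq : q ≤ 1) :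
    (∑ i ∈ s, f i) * b ^ (q - 1) ≤ ∑ i ∈ s, f i ^ q := by
  rw [sum_mul]
  exact sum_le_sum fun i hi => mul_rpow_sub_one_le_rpow (hf i hi) (hfb i hi) hq

/-- If no term exceeds `t`, compare each `x i ^ q` with `x i * t ^ (q - 1)`. Otherwise one term
`x j > t` contributes at least `t ^ q` by itself, and the remaining terms, which add up to at
least `t`, contribute at least `t ^ q` together by the same comparison with their own sum. -/
theorem two_mul_rpow_le_sum_rpow {ι : Type*} [Fintype ι] {x : ι → ℝ} {t q : ℝ}
    (hx : ∀ i, 0 ≤ x i) (ht : 0 < t) (hq0 : 0 ≤ q) (hq1 : q ≤ 1)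
    (hsum : 2 * t ≤ ∑ i, x i) (hle : ∀ i, x i + t ≤ ∑ j, x j) :
    2 * t ^ q ≤ ∑ i, x i ^ q := by
  classical
  by_cases hsmall : ∀ i, x i ≤ t
  · calc 2 * t ^ q = 2 * t * t ^ (q - 1) := by rw [rpow_sub_one ht.ne']; field_simp
      _ ≤ (∑ i, x i) * t ^ (q - 1) := by gcongr
      _ ≤ ∑ i, x i ^ q :=
        sum_mul_rpow_sub_one_le_sum_rpow _ (fun i _ => hx i) (fun i _ => hsmall i) hq1
  push Not at hsmall
  obtain ⟨j, hj⟩ := hsmall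
  set r := ∑ i ∈ univ.erase j, x i
  have hsplit (g : ι → ℝ) : ∑ i, g i = g j + ∑ i ∈ univ.erase j, g i :=
    (add_sum_erase _ _ (mem_univ j)).symm
  have htr : t ≤ r := by linarith [hle j, hsplit x]
  have hr : 0 < r := ht.trans_le htr
  calc 2 * t ^ q = t ^ q + t ^ q := two_mul _
    _ ≤ x j ^ q + r ^ q := by gcongr
    _ = x j ^ q + r * r ^ (q - 1) := by rw [rpow_sub_one hr.ne', mul_div_cancel₀ _ hr.ne']
    _ ≤ x j ^ q + ∑ i ∈ univ.erase j, x i ^ q := by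
        gcongr
        exact sum_mul_rpow_sub_one_le_sum_rpow _ (fun i _ => hx i)
          (fun i hi => single_le_sum (fun k _ => hx k) hi) hq1
    _ = ∑ i, x i ^ q := (hsplit fun i => x i ^ q).symm

end Real

lemma Matrix.exists_norm_le_sum_norm_of_hasEigenvalue {K n : Type*} [NormedField K] [Fintype n]
    [DecidableEq n] {A : Matrix n n K} {μ : K} (hμ : Module.End.HasEigenvalue (toLin' A) μ) :
    ∃ k, ‖μ‖ ≤ ∑ j, ‖A k j‖ := by
  obtain ⟨k, hk⟩ := eigenvalue_mem_ball hμ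
  refine ⟨k, ?_⟩
  rw [mem_closedBall_iff_norm] at hk
  rw [← add_sum_erase _ _ (mem_univ k)]
  linarith [norm_le_norm_add_norm_sub' μ (A k k)]

namespace Matrix.IsHermitian

variable {𝕜 n : Type*} [RCLike 𝕜] [Fintype n] [DecidableEq n] {A : Matrix n n 𝕜}

lemma hasEigenvalue_eigenvalues (hA : A.IsHermitian) (i : n) :
    Module.End.HasEigenvalue (toLin' A) (hA.eigenvalues i : 𝕜) := by
  rw [Module.End.hasEigenvalue_iff_mem_spectrum, spectrum_toLin']
  exact spectrum.algebraMap_mem 𝕜 (hA.eigenvalues_mem_spectrum_real i)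

lemma trace_mul_self (hA : A.IsHermitian) :
    (A * A).trace = ∑ i, (hA.eigenvalues i : 𝕜) ^ 2 := by
  rw [← sq, ← cfc_pow_id (R := ℝ) A 2 hA.isSelfAdjoint, hA.cfc_eq, IsHermitian.cfc,
    Unitary.conjStarAlgAut_apply, trace_mul_cycle, Unitary.coe_star_mul_self, one_mul,
    trace_diagonal]
  simp

end Matrix.IsHermitian

namespace SimpleGraph

variable {V : Type*} [Fintype V] (G : SimpleGraph V) [DecidableRel G.Adj]

lemma trace_adjMatrix_mul_self {α : Type*} [NonAssocSemiring α] :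
    (G.adjMatrix α * G.adjMatrix α).trace = 2 * #G.edgeFinset := by
  simp only [Matrix.trace, Matrix.diag_apply, adjMatrix_mul_self_apply_self]
  rw [← Nat.cast_sum, sum_degrees_eq_twice_card_edges]
  push_cast
  rfl

lemma sum_adjMatrix_mul_self_apply {α : Type*} [NonAssocSemiring α] (k : V) :
    ∑ j, (G.adjMatrix α * G.adjMatrix α) k j = ∑ u ∈ G.neighborFinset k, (G.degree u : α) := by
  simp_rw [adjMatrix_mul_apply]
  rw [sum_comm]
  refine sum_congr rfl fun u _ => ?_
  simpa [Matrix.mulVec, dotProduct] using G.adjMatrix_mulVec_const_apply (a := (1 : α)) (v := u)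

/-- The vertices outside the neighbourhood of `k` are `k` itself, of degree `deg k`, and
`card V - 1 - deg k` others, of degree at least one each. -/
lemma sum_degree_neighborFinset_add_le (hdeg : ∀ v, 0 < G.degree v) (k : V) :
    ∑ u ∈ G.neighborFinset k, G.degree u + (Fintype.card V - 1) ≤ 2 * #G.edgeFinset := by
  classical
  have hk : k ∈ (G.neighborFinset k)ᶜ := by simp
  have hrest := card_nsmul_le_sum ((G.neighborFinset k)ᶜ.erase k) (fun u => G.degree u) 1
    fun u _ => hdeg u
  rw [smul_eq_mul, mul_one, card_erase_of_mem hk, card_compl,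
    card_neighborFinset_eq_degree] at hrest
  have := G.degree_lt_card_verts k
  rw [← sum_degrees_eq_twice_card_edges, ← sum_add_sum_compl (G.neighborFinset k),
    ← add_sum_erase _ _ hk]
  omega

/-- Hong's bound `μ² ≤ 2m - n + 1`: Gershgorin's theorem applied to the eigenvalue `μ²` of the
nonnegative matrix `A²`, whose `k`-th row sums the degrees of the neighbours of `k`. -/
theorem sq_add_card_sub_one_le_of_hasEigenvalue [DecidableEq V] (hdeg : ∀ v, 0 < G.degree v)
    {μ : ℝ} (hμ : Module.End.HasEigenvalue (Matrix.toLin' (G.adjMatrix ℝ)) μ) :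
    μ ^ 2 + ((Fintype.card V : ℝ) - 1) ≤ 2 * #G.edgeFinset := by
  have : Nonempty V := hμ.nonempty
  have hμ2 :
      Module.End.HasEigenvalue (Matrix.toLin' (G.adjMatrix ℝ * G.adjMatrix ℝ)) (μ ^ 2) := by
    simpa [sq, Matrix.toLin'_mul, Module.End.mul_eq_comp] using hμ.pow 2
  obtain ⟨k, hk⟩ := Matrix.exists_norm_le_sum_norm_of_hasEigenvalue hμ2
  have hnonneg (j : V) : 0 ≤ (G.adjMatrix ℝ * G.adjMatrix ℝ) k j := by
    rw [adjMatrix_mul_apply]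
    exact sum_nonneg fun u _ => by rw [adjMatrix_apply]; split_ifs <;> norm_num
  simp_rw [Real.norm_of_nonneg (sq_nonneg μ), Real.norm_of_nonneg (hnonneg _),
    sum_adjMatrix_mul_self_apply] at hk
  have hdeg_sum := G.sum_degree_neighborFinset_add_le hdeg k
  have hV : 1 ≤ Fintype.card V := Fintype.card_pos
  calc μ ^ 2 + ((Fintype.card V : ℝ) - 1)
      ≤ ∑ u ∈ G.neighborFinset k, (G.degree u : ℝ) + ((Fintype.card V - 1 : ℕ) : ℝ) := by
        push_cast [Nat.cast_sub hV]
        linarith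
    _ ≤ 2 * #G.edgeFinset := by exact_mod_cast hdeg_sum

end SimpleGraph

/-- For a connected graph `G` on `n ≥ 2` vertices and `0 < p < 2`, the `p`-energy of `G`
is at least `2(n-1)^(p/2) = E_p(Sₙ)`. -/
theorem pEnergy_ge_star {n : ℕ} (hn : 2 ≤ n) (G : SimpleGraph (Fin n)) [DecidableRel G.Adj]
    (hG : G.Connected) (p : ℝ) (hp0 : 0 < p) (hp2 : p < 2) :
    2 * ((n : ℝ) - 1) ^ (p / 2) ≤ pEnergy G p := by
  have : Nontrivial (Fin n) := Fin.nontrivial_iff_two_le.mpr hn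
  have hA : (G.adjMatrix ℝ).IsHermitian :=
    (Matrix.conjTranspose_eq_transpose_of_trivial _).trans G.isSymm_adjMatrix
  have hdeg : ∀ v, 0 < G.degree v := fun v => hG.preconnected.degree_pos_of_nontrivial v
  have hn' : (2 : ℝ) ≤ n := by exact_mod_cast hn
  have hsum : ∑ i, hA.eigenvalues i ^ 2 = 2 * #G.edgeFinset := by
    simpa [hA.trace_mul_self] using G.trace_adjMatrix_mul_self (α := ℝ)
  have hedges : (n : ℝ) ≤ #G.edgeFinset + 1 := by
    have := hG.card_vert_le_card_edgeSet_add_one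
    rw [Nat.card_eq_fintype_card, Fintype.card_fin, Nat.card_eq_fintype_card,
      ← SimpleGraph.edgeFinset_card] at this
    exact_mod_cast this
  have hpow (i : Fin n) : |hA.eigenvalues i| ^ p = (hA.eigenvalues i ^ 2) ^ (p / 2) := by
    rw [← sq_abs, ← Real.rpow_natCast, ← Real.rpow_mul (abs_nonneg _)]
    ring_nf
  simp only [pEnergy, adjEigenvalues, hpow]
  refine Real.two_mul_rpow_le_sum_rpow (fun i => sq_nonneg _) (by linarith) (by linarith)
    (by linarith) (by linarith) fun i => ?_
  have := G.sq_add_card_sub_one_le_of_hasEigenvalue hdeg (hA.hasEigenvalue_eigenvalues i)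
  simp only [Fintype.card_fin, RCLike.ofReal_real_eq_id, id] at this
  linarith
end

section
/- Let p > 2 be a real number and let G be a connected simple graph with m edges and n ≥ 2 vertices. Then E_p(G) = 2m·(2m − n + 1)^{(p−2)/2} holds if and only if G is isomorphic to the star graph S_n. -/
open Finset MeasureTheory

/-!
Write `t = 2m - n + 1`. Every adjacency eigenvalue satisfies `λ² ≤ t`: by Gershgorin, `λ²` is at
most a row sum `∑_{l ∼ j} deg l` of `A²`, and this is at most `2m - (n - 1)` because every vertex
of a connected graph has positive degree. As `∑ λ² = tr A² = 2m` and `x ^ (p/2) ≤ x t ^ ((p-2)/2)`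
on `[0, t]` with equality only at `0` and `t`, the bound is attained iff every `λ²` is `0` or `t`,
i.e. iff `A³ = t A`. This identity says that every walk of length 3 joins adjacent vertices, so the
connected graph is complete bipartite, `K_{a,b}`. Then `A³ = ab A`, `n = a + b` and `m = ab`, and
`ab = 2ab - a - b + 1` forces `a = 1` or `b = 1`.
-/

namespace Real

theorem rpow_one_add_le_mul_rpow {x t q : ℝ} (hx : 0 ≤ x) (hxt : x ≤ t) (hq : 0 < q) :
    x ^ (1 + q) ≤ x * t ^ q := by
  rw [rpow_add' hx (by positivity), rpow_one]
  exact mul_le_mul_of_nonneg_left (rpow_le_rpow hx hxt hq.le) hx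

theorem rpow_one_add_eq_mul_rpow_iff {x t q : ℝ} (hx : 0 ≤ x) (ht : 0 ≤ t) (hq : 0 < q) :
    x ^ (1 + q) = x * t ^ q ↔ x = 0 ∨ x = t := by
  rw [rpow_add' hx (by positivity), rpow_one, mul_eq_mul_left_iff, rpow_left_inj hx ht hq.ne',
    or_comm]

theorem sum_rpow_one_add_eq_sum_mul_rpow_iff {ι : Type*} {s : Finset ι} {x : ι → ℝ} {t q : ℝ}
    (hx : ∀ i ∈ s, 0 ≤ x i ∧ x i ≤ t) (hq : 0 < q) :
    ∑ i ∈ s, x i ^ (1 + q) = (∑ i ∈ s, x i) * t ^ q ↔ ∀ i ∈ s, x i = 0 ∨ x i = t := by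
  rw [sum_mul, sum_eq_sum_iff_of_le fun i hi => rpow_one_add_le_mul_rpow (hx i hi).1 (hx i hi).2 hq]
  exact forall₂_congr fun i hi =>
    rpow_one_add_eq_mul_rpow_iff (hx i hi).1 ((hx i hi).1.trans (hx i hi).2) hq

end Real

namespace Matrix

variable {n : Type*} [Fintype n] [DecidableEq n]

theorem norm_le_of_mem_spectrum {K : Type*} [NormedField K] {A : Matrix n n K} {r : ℝ} {μ : K}
    (hμ : μ ∈ spectrum K A) (hA : ∀ k, ∑ j, ‖A k j‖ ≤ r) : ‖μ‖ ≤ r := by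
  obtain ⟨k, hk⟩ := eigenvalue_mem_ball (A := A)
    (Module.End.hasEigenvalue_iff_mem_spectrum.mpr (by rwa [spectrum_toLin']))
  rw [Metric.mem_closedBall, dist_eq_norm] at hk
  calc ‖μ‖ ≤ ‖μ - A k k‖ + ‖A k k‖ := norm_le_norm_sub_add _ _
    _ ≤ ∑ j, ‖A k j‖ := by rw [← add_sum_erase _ _ (mem_univ k)]; linarith
    _ ≤ r := hA k

namespace IsHermitian

variable {𝕜 : Type*} [RCLike 𝕜] {A : Matrix n n 𝕜} (hA : A.IsHermitian)
include hA

theorem pow_three_eq_smul_iff (t : ℝ) :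
    A ^ 3 = t • A ↔ ∀ i, hA.eigenvalues i ^ 3 = t * hA.eigenvalues i := by
  rw [← cfc_pow_id (R := ℝ) A 3 hA.isSelfAdjoint, ← cfc_const_mul_id t A hA.isSelfAdjoint,
    cfc_eq_cfc_iff_eqOn, hA.spectrum_real_eq_range_eigenvalues]
  exact Set.forall_mem_range

theorem trace_cfc (f : ℝ → ℝ) : (cfc f A).trace = ∑ i, (f (hA.eigenvalues i) : 𝕜) := by
  rw [hA.cfc_eq, IsHermitian.cfc, Unitary.conjStarAlgAut_apply, trace_mul_cycle,
    Unitary.coe_star_mul_self, one_mul, trace_diagonal]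
  rfl

theorem trace_sq : (A ^ 2).trace = ∑ i, (hA.eigenvalues i ^ 2 : 𝕜) := by
  rw [← cfc_pow_id (R := ℝ) A 2 hA.isSelfAdjoint, hA.trace_cfc]
  push_cast
  rfl

theorem sq_eigenvalues_mem_spectrum (i : n) : hA.eigenvalues i ^ 2 ∈ spectrum ℝ (A ^ 2) := by
  rw [← cfc_pow_id (R := ℝ) A 2 hA.isSelfAdjoint, cfc_map_spectrum (· ^ 2) A hA.isSelfAdjoint]
  exact ⟨_, hA.eigenvalues_mem_spectrum_real i, rfl⟩

end IsHermitian
end Matrix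

namespace SimpleGraph

variable {V : Type*} {G : SimpleGraph V}

section AdjMatrix

variable [Fintype V] [DecidableRel G.Adj]

theorem sum_degree_neighborFinset_add_card_le (hdeg : ∀ w, 0 < G.degree w) (j : V) :
    ∑ l ∈ G.neighborFinset j, G.degree l + Fintype.card V ≤ 2 * #G.edgeFinset + 1 := by
  classical
  have hj : j ∈ (G.neighborFinset j)ᶜ := by simp
  have hsplit := sum_add_sum_compl (G.neighborFinset j) fun l => G.degree l
  rw [sum_degrees_eq_twice_card_edges, ← add_sum_erase _ _ hj] at hsplit
  have hrest := card_nsmul_le_sum (((G.neighborFinset j)ᶜ).erase j) (fun l => G.degree l) 1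
    fun l _ => hdeg l
  rw [smul_eq_mul, mul_one, card_erase_of_mem hj, card_compl, card_neighborFinset_eq_degree]
    at hrest
  have := G.degree_lt_card_verts j
  omega

variable [DecidableEq V]

theorem sum_adjMatrix_sq_apply {α : Type*} [Semiring α] (j : V) :
    ∑ k, (G.adjMatrix α ^ 2) j k = ∑ l ∈ G.neighborFinset j, (G.degree l : α) := by
  simp only [sq, adjMatrix_mul_apply]
  rw [sum_comm]
  refine sum_congr rfl fun l _ => ?_
  simp [adjMatrix_apply, sum_boole, ← card_neighborFinset_eq_degree, neighborFinset_eq_filter]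

theorem trace_adjMatrix_sq {α : Type*} [Semiring α] :
    (G.adjMatrix α ^ 2).trace = 2 * #G.edgeFinset := by
  simp only [Matrix.trace, Matrix.diag, sq, adjMatrix_mul_self_apply_self]
  rw [← Nat.cast_sum, sum_degrees_eq_twice_card_edges, Nat.cast_mul, Nat.cast_ofNat]

theorem sq_eigenvalues_adjMatrix_le (hdeg : ∀ w, 0 < G.degree w) (i : V) :
    (G.isHermitian_adjMatrix ℝ).eigenvalues i ^ 2 ≤ 2 * #G.edgeFinset - Fintype.card V + 1 := by
  refine (Real.le_norm_self _).trans <| Matrix.norm_le_of_mem_spectrum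
    ((G.isHermitian_adjMatrix ℝ).sq_eigenvalues_mem_spectrum i) fun k => ?_
  have hrow : ∑ l ∈ G.neighborFinset k, (G.degree l : ℝ) + Fintype.card V ≤
      2 * #G.edgeFinset + 1 := by
    exact_mod_cast G.sum_degree_neighborFinset_add_card_le hdeg k
  have hnonneg (j : V) : 0 ≤ (G.adjMatrix ℝ ^ 2) k j := by
    rw [adjMatrix_pow_apply_eq_card_walk]
    positivity
  simp_rw [Real.norm_of_nonneg (hnonneg _), sum_adjMatrix_sq_apply]
  linarith

end AdjMatrix

-- Equivalently: every connected component is complete bipartite.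
def ThreeWalksAdj (G : SimpleGraph V) : Prop :=
  ∀ ⦃a b c d⦄, G.Adj a b → G.Adj b c → G.Adj c d → G.Adj a d

theorem threeWalksAdj_starGraph (r : V) : (starGraph r).ThreeWalksAdj := by
  intro a b c d hab hbc hcd
  simp only [starGraph_adj] at *
  grind

namespace ThreeWalksAdj

variable (hG : G.ThreeWalksAdj) {u v : V}
include hG

theorem not_adj_of_adj_of_adj {x : V} (huv : G.Adj u v) (hxu : G.Adj x u) : ¬ G.Adj x v :=
  fun hxv => G.irrefl (hG hxu huv hxv.symm)

theorem adj_or_adj (hc : G.Connected) (huv : G.Adj u v) (w : V) : G.Adj w u ∨ G.Adj w v := by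
  obtain ⟨p⟩ := hc.preconnected w u
  induction p with
  | nil => exact .inr huv
  | cons hwx _ ih =>
    rcases ih huv with hxu | hxv
    · exact .inr (hG hwx hxu huv)
    · exact .inl (hG hwx hxv huv.symm)

theorem neighborSet_eq (huv : G.Adj u v) {x : V} (hxv : G.Adj x v) :
    G.neighborSet x = G.neighborSet u := by
  ext z
  exact ⟨fun hxz => (hG hxz.symm hxv huv.symm).symm, fun huz => hG hxv huv.symm huz⟩

variable [Fintype V] [DecidableRel G.Adj]

theorem degree_eq (huv : G.Adj u v) {x : V} (hxv : G.Adj x v) : G.degree x = G.degree u := by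
  simp only [← card_neighborSet_eq_degree, hG.neighborSet_eq huv hxv]

theorem degree_mul_degree_eq (hc : G.Connected) (huv : G.Adj u v) {i j : V} (hij : G.Adj i j) :
    G.degree i * G.degree j = G.degree u * G.degree v := by
  rcases hG.adj_or_adj hc huv i with hiu | hiv
  · have hjv : G.Adj j v := hG hij.symm hiu huv
    rw [hG.degree_eq huv.symm hiu, hG.degree_eq huv hjv, mul_comm]
  · have hju : G.Adj j u := hG hij.symm hiv huv.symm
    rw [hG.degree_eq huv hiv, hG.degree_eq huv.symm hju]

theorem disjoint_neighborFinset (huv : G.Adj u v) :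
    Disjoint (G.neighborFinset u) (G.neighborFinset v) :=
  Finset.disjoint_left.mpr fun _ hxu hxv => hG.not_adj_of_adj_of_adj huv
    ((mem_neighborFinset ..).mp hxu).symm ((mem_neighborFinset ..).mp hxv).symm

variable [DecidableEq V]

theorem neighborFinset_union_eq_univ (hc : G.Connected) (huv : G.Adj u v) :
    G.neighborFinset u ∪ G.neighborFinset v = univ :=
  eq_univ_of_forall fun w => by
    simpa only [mem_union, mem_neighborFinset, G.adj_comm u, G.adj_comm v]
      using hG.adj_or_adj hc huv w

theorem card_eq_degree_add_degree (hc : G.Connected) (huv : G.Adj u v) :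
    Fintype.card V = G.degree u + G.degree v := by
  rw [← card_univ, ← hG.neighborFinset_union_eq_univ hc huv,
    card_union_of_disjoint (hG.disjoint_neighborFinset huv), card_neighborFinset_eq_degree,
    card_neighborFinset_eq_degree]

theorem card_edgeFinset_eq (hc : G.Connected) (huv : G.Adj u v) :
    #G.edgeFinset = G.degree u * G.degree v := by
  have hsum := G.sum_degrees_eq_twice_card_edges
  rw [← hG.neighborFinset_union_eq_univ hc huv, sum_union (hG.disjoint_neighborFinset huv),
    sum_congr rfl fun x hx => hG.degree_eq huv.symm ((mem_neighborFinset ..).mp hx).symm,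
    sum_congr rfl fun x hx => hG.degree_eq huv ((mem_neighborFinset ..).mp hx).symm,
    sum_const, sum_const, card_neighborFinset_eq_degree, card_neighborFinset_eq_degree,
    smul_eq_mul, smul_eq_mul] at hsum
  linarith

theorem eq_starGraph_of_degree_eq_one (hc : G.Connected) (huv : G.Adj u v)
    (hv : G.degree v = 1) : G = starGraph u := by
  have hleaf : ∀ w, G.Adj w v → w = u := by
    obtain ⟨a, ha⟩ := card_eq_one.mp hv
    intro w hwv
    have hw : w ∈ G.neighborFinset v := (mem_neighborFinset ..).mpr hwv.symm
    have hu : u ∈ G.neighborFinset v := (mem_neighborFinset ..).mpr huv.symm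
    rw [ha, mem_singleton] at hw hu
    rw [hw, hu]
  ext a b
  rw [starGraph_adj]
  refine ⟨fun hab => ⟨hab.ne, ?_⟩, fun ⟨hab, hu⟩ => ?_⟩
  · by_contra! h
    have hau := (hG.adj_or_adj hc huv a).resolve_right (h.1 ∘ hleaf a)
    have hbu := (hG.adj_or_adj hc huv b).resolve_right (h.2 ∘ hleaf b)
    exact G.irrefl (hG hau.symm hab hbu)
  · rcases hu with rfl | rfl
    · exact ((hG.adj_or_adj hc huv b).resolve_right fun hbv => hab (hleaf b hbv).symm).symm
    · exact (hG.adj_or_adj hc huv a).resolve_right fun hav => hab (hleaf a hav)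

theorem adjMatrix_pow_three_apply {α : Type*} [Semiring α] (i j : V) :
    (G.adjMatrix α ^ 3) i j = if G.Adj i j then (G.degree i * G.degree j : α) else 0 := by
  simp only [pow_three, adjMatrix_mul_apply, mul_adjMatrix_apply]
  split_ifs with hij
  · have hall : ∀ x ∈ G.neighborFinset i, ∀ y ∈ G.neighborFinset j, G.Adj x y :=
      fun x hx y hy => hG ((mem_neighborFinset ..).mp hx).symm hij ((mem_neighborFinset ..).mp hy)
    simp_rw [adjMatrix_apply]
    rw [sum_congr rfl fun x hx => sum_congr rfl fun y hy => if_pos (hall x hx y hy)]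
    simp
  · refine sum_eq_zero fun x hx => sum_eq_zero fun y hy => ?_
    rw [adjMatrix_apply, if_neg fun hxy =>
      hij (hG ((mem_neighborFinset ..).mp hx) hxy ((mem_neighborFinset ..).mp hy).symm)]

theorem adjMatrix_pow_three_eq_smul {α : Type*} [Semiring α] (hc : G.Connected)
    (huv : G.Adj u v) : G.adjMatrix α ^ 3 = (G.degree u * G.degree v : α) • G.adjMatrix α := by
  ext i j
  rw [hG.adjMatrix_pow_three_apply, Matrix.smul_apply, adjMatrix_apply, smul_eq_mul]
  split_ifs with hij
  · rw [mul_one, ← Nat.cast_mul, ← Nat.cast_mul, hG.degree_mul_degree_eq hc huv hij]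
  · rw [mul_zero]

theorem adjMatrix_pow_three_eq_smul_iff (hc : G.Connected) (huv : G.Adj u v) :
    G.adjMatrix ℝ ^ 3 = (2 * #G.edgeFinset - Fintype.card V + 1 : ℝ) • G.adjMatrix ℝ ↔
      ((G.degree u : ℝ) - 1) * ((G.degree v : ℝ) - 1) = 0 := by
  have hA : G.adjMatrix ℝ ≠ 0 := fun h => by simpa [huv] using congr_fun (congr_fun h u) v
  rw [hG.adjMatrix_pow_three_eq_smul hc huv, (smul_left_injective ℝ hA).eq_iff,
    hG.card_edgeFinset_eq hc huv, hG.card_eq_degree_add_degree hc huv]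
  push_cast
  constructor <;> intro h <;> linarith

end ThreeWalksAdj

theorem threeWalksAdj_of_adjMatrix_pow_three_eq_smul {α : Type*} [Semiring α] [CharZero α]
    [Fintype V] [DecidableEq V] [DecidableRel G.Adj] {t : α}
    (h : G.adjMatrix α ^ 3 = t • G.adjMatrix α) : G.ThreeWalksAdj := by
  intro a b c d hab hbc hcd
  by_contra had
  have hwalks := adjMatrix_pow_apply_eq_card_walk (G := G) (α := α) 3 a d
  rw [h, Matrix.smul_apply, adjMatrix_apply, if_neg had, smul_zero, eq_comm, Nat.cast_eq_zero,
    Fintype.card_eq_zero_iff] at hwalks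
  exact hwalks.false ⟨.cons hab (.cons hbc (.cons hcd .nil)), rfl⟩

theorem adjMatrix_pow_three_eq_smul_iff [Fintype V] [DecidableEq V] [DecidableRel G.Adj]
    [Nontrivial V] (hc : G.Connected) :
    G.adjMatrix ℝ ^ 3 = (2 * #G.edgeFinset - Fintype.card V + 1 : ℝ) • G.adjMatrix ℝ ↔
      ∃ c, G = starGraph c := by
  constructor
  · intro h
    have hG := threeWalksAdj_of_adjMatrix_pow_three_eq_smul h
    obtain ⟨u⟩ := hc.nonempty
    obtain ⟨v, huv⟩ :=
      (G.degree_pos_iff_exists_adj u).mp (hc.preconnected.degree_pos_of_nontrivial u)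
    rcases mul_eq_zero.mp ((hG.adjMatrix_pow_three_eq_smul_iff hc huv).mp h) with hu | hv
    · exact ⟨v, hG.eq_starGraph_of_degree_eq_one hc huv.symm (by exact_mod_cast sub_eq_zero.mp hu)⟩
    · exact ⟨u, hG.eq_starGraph_of_degree_eq_one hc huv (by exact_mod_cast sub_eq_zero.mp hv)⟩
  · rintro ⟨c, rfl⟩
    obtain ⟨v, hv⟩ := exists_ne c
    have hdeg : (starGraph c).degree v = 1 := by convert degree_starGraph_of_ne_center hv
    refine ((threeWalksAdj_starGraph c).adjMatrix_pow_three_eq_smul_iff hc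
      (starGraph_center_adj hv.symm)).mpr ?_
    rw [hdeg, Nat.cast_one, sub_self, mul_zero]

theorem nonempty_iso_starGraph_iff [DecidableEq V] (r : V) :
    Nonempty (G ≃g starGraph r) ↔ ∃ c, G = starGraph c := by
  constructor
  · rintro ⟨e⟩
    refine ⟨e.symm r, ?_⟩
    ext a b
    rw [← e.map_adj_iff, starGraph_adj, starGraph_adj, e.injective.ne_iff,
      ← e.eq_symm_apply, ← e.eq_symm_apply]
  · rintro ⟨c, rfl⟩
    refine ⟨⟨Equiv.swap c r, ?_⟩⟩
    intro a b
    simp [starGraph_adj, Equiv.swap_apply_eq_iff]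

end SimpleGraph

theorem starGraph_eq_starGraph_zero {n : ℕ} (hn : 0 < n) :
    starGraph n = SimpleGraph.starGraph ⟨0, hn⟩ := by
  ext a b
  simp [starGraph, Fin.ext_iff]
  tauto

/-- For `p > 2` and a connected graph with `m` edges and `n ≥ 2` vertices, equality
`E_p(G) = 2m (2m - n + 1)^((p-2)/2)` holds iff `G` is isomorphic to the star `Sₙ`. -/
theorem pEnergy_eq_bound_iff_star {n m : ℕ} (hn : 2 ≤ n) (G : SimpleGraph (Fin n))
    [DecidableRel G.Adj] (hG : G.Connected) (hm : G.edgeFinset.card = m) (p : ℝ) (hp : 2 < p) :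
    pEnergy G p = 2 * m * (2 * (m : ℝ) - n + 1) ^ ((p - 2) / 2) ↔
      Nonempty (G ≃g starGraph n) := by
  have : Nontrivial (Fin n) := Fin.nontrivial_iff_two_le.mpr hn
  have hA := G.isHermitian_adjMatrix ℝ
  set t : ℝ := 2 * m - n + 1
  have hbound (i : Fin n) : 0 ≤ hA.eigenvalues i ^ 2 ∧ hA.eigenvalues i ^ 2 ≤ t := by
    refine ⟨sq_nonneg _, ?_⟩
    simpa [hm] using G.sq_eigenvalues_adjMatrix_le
      (fun w => hG.preconnected.degree_pos_of_nontrivial w) i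
  have hsum : ∑ i, hA.eigenvalues i ^ 2 = 2 * m := by
    simpa [hm] using hA.trace_sq.symm.trans G.trace_adjMatrix_sq
  have hpow : pEnergy G p = ∑ i, (hA.eigenvalues i ^ 2) ^ (1 + (p - 2) / 2) := by
    refine sum_congr rfl fun i _ => ?_
    rw [adjEigenvalues, ← sq_abs, ← Real.rpow_natCast, ← Real.rpow_mul (abs_nonneg _)]
    congr 1
    push_cast
    ring
  have hcube (x : ℝ) : x ^ 2 = 0 ∨ x ^ 2 = t ↔ x ^ 3 = t * x := by
    rw [sq_eq_zero_iff, ← sub_eq_zero (b := t), ← mul_eq_zero, ← sub_eq_zero (a := x ^ 3)]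
    ring_nf
  rw [hpow, ← hsum, Real.sum_rpow_one_add_eq_sum_mul_rpow_iff (fun i _ => hbound i) (by linarith),
    starGraph_eq_starGraph_zero (by omega), SimpleGraph.nonempty_iso_starGraph_iff,
    ← SimpleGraph.adjMatrix_pow_three_eq_smul_iff hG, hA.pow_three_eq_smul_iff, hm,
    Fintype.card_fin]
  simp only [mem_univ, true_imp_iff]
  exact forall_congr' fun i => hcube _
end
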